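/- arXiv:1601.01916 — 2 statements merged into one kernel-verified Lean document; each statement's English description precedes it below -/
import Mathlib

section
/- Let ω ∈ ℝ, let x ∈ ℝ² be nonzero, and let ξ ∈ ℝ². For each positive integer N set θ_n = θ(2πn/N) for n = 1,…,N. Then (1/N) ∑_{n=1}^{N} ⟨θ_n, ξ⟩ · exp(i·ω·⟨θ_n, x⟩) tends to i · ⟨x/‖x‖, ξ⟩ · J₁(ω‖x‖) as N → ∞. -/
/-!
The mean is a Riemann sum of `(1/2π) ∫₀^{2π} ⟨θ(s), ξ⟩ e^{iω⟨θ(s), x⟩} ds`. Writing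
`x = ‖x‖ θ(α)` and substituting `s = α - π/2 + t` turns the phase into `ω‖x‖ sin t` and splits
`⟨θ(s), ξ⟩` as `cos t ⟨θ(α - π/2), ξ⟩ + sin t ⟨θ(α), ξ⟩`. The `cos t` part integrates to zero,
being `cos t · h(sin t)` with `sin(-π) = sin π`. Folding `[-π, π]` onto `[0, π]`, the `sin t` part
becomes `2i ∫₀^π sin t sin(ω‖x‖ sin t) dt`, which is `2πi J₁(ω‖x‖)` because the companion term
`∫₀^π cos t cos(r sin t) dt` of Bessel's integral vanishes for the same reason.
-/

open MeasureTheory Real Filter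
open scoped RealInnerProductSpace

/-- Bessel function of the first kind of order 0 (Bessel's integral). -/
noncomputable def J0 (u : ℝ) : ℝ := (1 / π) * ∫ τ in (0:ℝ)..π, Real.cos (u * Real.sin τ)

/-- Bessel function of the first kind of order 1 (Bessel's integral). -/
noncomputable def J1 (u : ℝ) : ℝ := (1 / π) * ∫ τ in (0:ℝ)..π, Real.cos (τ - u * Real.sin τ)

/-- The unit direction `θ(s) = (cos s, sin s)` in `ℝ²`. -/
noncomputable def unitDir (s : ℝ) : EuclideanSpace ℝ (Fin 2) := WithLp.toLp 2 ![Real.cos s, Real.sin s]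

open Topology

section RiemannSum

variable {E : Type*} [NormedAddCommGroup E] [NormedSpace ℝ E] [CompleteSpace E] {f : ℝ → E}

lemma norm_smul_sub_integral_le {a b C : ℝ} (hab : a ≤ b) (hf : IntervalIntegrable f volume a b)
    (hC : ∀ t ∈ Set.Ioc a b, ‖f b - f t‖ ≤ C) :
    ‖(b - a) • f b - ∫ t in a..b, f t‖ ≤ C * (b - a) := by
  rw [← intervalIntegral.integral_const, ← intervalIntegral.integral_sub intervalIntegrable_const hf,
    ← abs_of_nonneg (sub_nonneg.2 hab)]
  exact intervalIntegral.norm_integral_le_of_norm_le_const (by rwa [Set.uIoc_of_le hab])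

lemma norm_riemannSum_sub_integral_le (hf : ContinuousOn f (Set.Icc 0 1)) {ε δ : ℝ}
    (hfδ : ∀ s ∈ Set.Icc (0 : ℝ) 1, ∀ t ∈ Set.Icc (0 : ℝ) 1, dist s t ≤ δ → dist (f s) (f t) ≤ ε)
    {N : ℕ} (hN : 0 < N) (hNδ : (N : ℝ)⁻¹ ≤ δ) :
    ‖(N : ℝ)⁻¹ • ∑ n ∈ Finset.Icc 1 N, f (n / N) - ∫ t in 0..1, f t‖ ≤ ε := by
  set a : ℕ → ℝ := fun k => k / N
  have hNpos : (0 : ℝ) < N := Nat.cast_pos.2 hN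
  have ha_step (k : ℕ) : a (k + 1) - a k = (N : ℝ)⁻¹ := by
    simp only [a]; push_cast; field_simp; ring
  have ha_le (k : ℕ) : a k ≤ a (k + 1) := by linarith [ha_step k, inv_nonneg.2 hNpos.le]
  have ha_mem {k : ℕ} (hk : k ≤ N) : a k ∈ Set.Icc (0 : ℝ) 1 :=
    ⟨by positivity, div_le_one_of_le₀ (by exact_mod_cast hk) hNpos.le⟩
  have hcell {k : ℕ} (hk : k < N) : Set.Icc (a k) (a (k + 1)) ⊆ Set.Icc 0 1 :=
    Set.Icc_subset_Icc (ha_mem hk.le).1 (ha_mem hk).2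
  have hf_cell {k : ℕ} (hk : k < N) : IntervalIntegrable f volume (a k) (a (k + 1)) :=
    (hf.mono (hcell hk)).intervalIntegrable_of_Icc (ha_le k)
  have hint : ∫ t in 0..1, f t = ∑ k ∈ Finset.range N, ∫ t in a k..a (k + 1), f t := by
    rw [intervalIntegral.sum_integral_adjacent_intervals (a := a) fun k hk => hf_cell hk]
    simp [a, hNpos.ne']
  have hsum : (N : ℝ)⁻¹ • ∑ n ∈ Finset.Icc 1 N, f (n / N) =
      ∑ k ∈ Finset.range N, (a (k + 1) - a k) • f (a (k + 1)) := by
    simp only [ha_step, ← Finset.smul_sum, a]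
    rw [← Finset.Ico_add_one_right_eq_Icc, Finset.sum_Ico_eq_sum_range]
    simp [add_comm]
  have hcell_err {k : ℕ} (hk : k < N) :
      ‖(a (k + 1) - a k) • f (a (k + 1)) - ∫ t in a k..a (k + 1), f t‖ ≤ ε * (a (k + 1) - a k) :=
    norm_smul_sub_integral_le (ha_le k) (hf_cell hk) fun t ht => by
      rw [← dist_eq_norm]
      refine hfδ _ (ha_mem hk) _ (hcell hk (Set.Ioc_subset_Icc_self ht)) ?_
      rw [Real.dist_eq, abs_of_nonneg (sub_nonneg.2 ht.2)]
      linarith [ha_step k, ht.1]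
  calc ‖(N : ℝ)⁻¹ • ∑ n ∈ Finset.Icc 1 N, f (n / N) - ∫ t in 0..1, f t‖
      ≤ ∑ k ∈ Finset.range N, ε * (a (k + 1) - a k) := by
        rw [hsum, hint, ← Finset.sum_sub_distrib]
        exact norm_sum_le_of_le _ fun k hk => hcell_err (Finset.mem_range.1 hk)
    _ = ε := by
        rw [← Finset.mul_sum, Finset.sum_range_sub]
        simp [a, hNpos.ne']

theorem tendsto_riemannSum_integral (hf : ContinuousOn f (Set.Icc 0 1)) :
    Tendsto (fun N : ℕ => (N : ℝ)⁻¹ • ∑ n ∈ Finset.Icc 1 N, f (n / N)) atTop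
      (𝓝 (∫ t in 0..1, f t)) := by
  rw [Metric.tendsto_nhds]
  intro ε hε
  obtain ⟨δ, hδ, hfδ⟩ := Metric.uniformContinuousOn_iff_le.1
    (isCompact_Icc.uniformContinuousOn_of_continuous hf) (ε / 2) (half_pos hε)
  have hNδ : ∀ᶠ N : ℕ in atTop, (N : ℝ)⁻¹ ≤ δ :=
    tendsto_inv_atTop_nhds_zero_nat.eventually (ge_mem_nhds hδ)
  filter_upwards [hNδ, eventually_gt_atTop 0] with N hNδ hN
  rw [dist_eq_norm]
  exact (norm_riemannSum_sub_integral_le hf hfδ hN hNδ).trans_lt (half_lt_self hε)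

end RiemannSum

@[fun_prop]
lemma continuous_unitDir : Continuous unitDir :=
  (PiLp.continuous_toLp 2 _).comp (by fun_prop)

lemma unitDir_periodic : Function.Periodic unitDir (2 * π) := by
  intro s
  simp [unitDir]

lemma inner_unitDir_unitDir (s t : ℝ) : ⟪unitDir s, unitDir t⟫ = cos (s - t) := by
  simp [unitDir, PiLp.inner_apply, Fin.sum_univ_two, cos_sub]
  ring

lemma unitDir_add (a t : ℝ) :
    unitDir (a + t) = cos t • unitDir a + sin t • unitDir (a + π / 2) := by
  ext i
  fin_cases i <;> simp [unitDir, cos_add, sin_add] <;> ring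

lemma exists_eq_norm_smul_unitDir (x : EuclideanSpace ℝ (Fin 2)) :
    ∃ α, x = ‖x‖ • unitDir α := by
  set z := Complex.orthonormalBasisOneI.repr.symm x
  have hz : ‖z‖ = ‖x‖ := Complex.orthonormalBasisOneI.repr.symm.norm_map x
  refine ⟨Complex.arg z, ?_⟩
  ext i
  fin_cases i
  · simp [unitDir, ← hz, Complex.norm_mul_cos_arg, z]
  · simp [unitDir, ← hz, Complex.norm_mul_sin_arg, z]

lemma integral_neg_self_eq_integral_add_comp_neg {E : Type*} [NormedAddCommGroup E]
    [NormedSpace ℝ E] {f : ℝ → E} (hf : Continuous f) (a : ℝ) :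
    ∫ t in -a..a, f t = ∫ t in 0..a, (f t + f (-t)) := by
  rw [intervalIntegral.integral_add (hf.intervalIntegrable _ _)
      (Continuous.intervalIntegrable (by fun_prop) _ _),
    intervalIntegral.integral_comp_neg, neg_zero, add_comm,
    intervalIntegral.integral_add_adjacent_intervals (hf.intervalIntegrable _ _)
      (hf.intervalIntegrable _ _)]

lemma J1_zero : J1 0 = 0 := by
  simp [J1]

lemma integral_sin_mul_sin_mul_sin_eq_pi_mul_J1 (r : ℝ) :
    ∫ t in 0..π, sin t * sin (r * sin t) = π * J1 r := by
  have hcos : ∫ t in 0..π, cos t * cos (r * sin t) = 0 := by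
    simpa using intervalIntegral.integral_deriv_smul_comp (fun t _ => hasDerivAt_sin t)
      continuousOn_cos (show Continuous fun u => cos (r * u) by fun_prop) (a := 0) (b := π)
  have hJ1 : π * J1 r = ∫ t in 0..π, (cos t * cos (r * sin t) + sin t * sin (r * sin t)) := by
    simp_rw [J1, ← cos_sub]
    field_simp [pi_ne_zero]
  rw [hJ1, intervalIntegral.integral_add (Continuous.intervalIntegrable (by fun_prop) _ _)
    (Continuous.intervalIntegrable (by fun_prop) _ _), hcos, zero_add]

lemma integral_cos_mul_exp_sin_eq_zero (r : ℝ) :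
    ∫ t in -π..π, (cos t : ℂ) * Complex.exp ((r * sin t : ℝ) * Complex.I) = 0 := by
  have := intervalIntegral.integral_deriv_smul_comp (fun t _ => hasDerivAt_sin t)
    continuousOn_cos (show Continuous fun u : ℝ => Complex.exp ((r * u : ℝ) * Complex.I) by fun_prop)
    (a := -π) (b := π)
  simpa only [Function.comp_apply, Complex.real_smul, sin_neg, sin_pi, neg_zero,
    intervalIntegral.integral_same] using this

lemma integral_sin_mul_exp_sin_eq_J1 (r : ℝ) :
    ∫ t in -π..π, (sin t : ℂ) * Complex.exp ((r * sin t : ℝ) * Complex.I) =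
      2 * π * J1 r * Complex.I := by
  have hfold (t : ℝ) : (sin t : ℂ) * Complex.exp ((r * sin t : ℝ) * Complex.I) +
      (sin (-t) : ℂ) * Complex.exp ((r * sin (-t) : ℝ) * Complex.I) =
        ((2 * (sin t * sin (r * sin t)) : ℝ) : ℂ) * Complex.I := by
    simp only [sin_neg, mul_neg, Complex.ofReal_neg]
    rw [Complex.exp_mul_I, Complex.exp_mul_I, Complex.cos_neg, Complex.sin_neg]
    push_cast
    ring
  rw [integral_neg_self_eq_integral_add_comp_neg (by fun_prop)]
  simp_rw [hfold]
  rw [intervalIntegral.integral_mul_const, intervalIntegral.integral_ofReal,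
    intervalIntegral.integral_const_mul, integral_sin_mul_sin_mul_sin_eq_pi_mul_J1]
  push_cast
  ring

lemma integral_inner_unitDir_mul_exp_cos (r α : ℝ) (ξ : EuclideanSpace ℝ (Fin 2)) :
    ∫ s in 0..2 * π, (⟪unitDir s, ξ⟫ : ℂ) * Complex.exp ((r * cos (s - α) : ℝ) * Complex.I) =
      2 * π * ⟪unitDir α, ξ⟫ * J1 r * Complex.I := by
  set g : ℝ → ℂ := fun s =>
    (⟪unitDir s, ξ⟫ : ℂ) * Complex.exp ((r * cos (s - α) : ℝ) * Complex.I)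
  have hper : Function.Periodic g (2 * π) := by
    intro s
    simp only [g, unitDir_periodic s, add_sub_right_comm, cos_add_two_pi]
  -- the shift by `α - π/2` turns the phase `r cos (s - α)` into Bessel's `r sin t`
  have hshift : ∫ s in 0..2 * π, g s = ∫ t in -π..π, g (α - π / 2 + t) := by
    rw [intervalIntegral.integral_comp_add_left, ← zero_add (2 * π),
      hper.intervalIntegral_add_eq 0 (α - π / 2 + -π)]
    ring_nf
  have hsplit (t : ℝ) : g (α - π / 2 + t) =
      ⟪unitDir (α - π / 2), ξ⟫ * ((cos t : ℂ) * Complex.exp ((r * sin t : ℝ) * Complex.I)) +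
        ⟪unitDir α, ξ⟫ * ((sin t : ℂ) * Complex.exp ((r * sin t : ℝ) * Complex.I)) := by
    have hphase : α - π / 2 + t - α = t - π / 2 := by ring
    simp only [g, unitDir_add, sub_add_cancel, inner_add_left, real_inner_smul_left, hphase,
      cos_sub_pi_div_two]
    push_cast
    ring
  rw [hshift]
  simp_rw [hsplit]
  rw [intervalIntegral.integral_add (Continuous.intervalIntegrable (by fun_prop) _ _)
      (Continuous.intervalIntegrable (by fun_prop) _ _),
    intervalIntegral.integral_const_mul, intervalIntegral.integral_const_mul,
    integral_cos_mul_exp_sin_eq_zero, integral_sin_mul_exp_sin_eq_J1]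
  ring

lemma integral_inner_unitDir_mul_exp_inner (ω : ℝ) (x ξ : EuclideanSpace ℝ (Fin 2)) :
    ∫ s in 0..2 * π, (⟪unitDir s, ξ⟫ : ℂ) *
        Complex.exp (Complex.I * ω * (⟪unitDir s, x⟫ : ℝ)) =
      2 * π * (Complex.I * (⟪‖x‖⁻¹ • x, ξ⟫ : ℝ) * (J1 (ω * ‖x‖) : ℝ)) := by
  obtain ⟨α, hα⟩ := exists_eq_norm_smul_unitDir x
  have hphase (s : ℝ) :
      Complex.I * ω * (⟪unitDir s, x⟫ : ℝ) = (ω * ‖x‖ * cos (s - α) : ℝ) * Complex.I := by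
    conv_lhs => rw [hα, real_inner_smul_right, inner_unitDir_unitDir]
    push_cast
    ring
  have hcoef : (⟪‖x‖⁻¹ • x, ξ⟫ : ℂ) * (J1 (ω * ‖x‖) : ℂ) =
      (⟪unitDir α, ξ⟫ : ℂ) * (J1 (ω * ‖x‖) : ℂ) := by
    rcases eq_or_ne x 0 with rfl | hx
    · simp [J1_zero]
    · congr 3
      calc ‖x‖⁻¹ • x = ‖x‖⁻¹ • ‖x‖ • unitDir α := congrArg _ hα
        _ = unitDir α := by rw [smul_smul, inv_mul_cancel₀ (norm_ne_zero_iff.2 hx), one_smul]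
  simp_rw [hphase, integral_inner_unitDir_mul_exp_cos]
  linear_combination (-2 * π * Complex.I) * hcoef

theorem weighted_discrete_mean_tendsto_J1_general (ω : ℝ) (x ξ : EuclideanSpace ℝ (Fin 2)) :
    Tendsto
      (fun N : ℕ =>
        (1 / (N : ℂ)) *
          ∑ n ∈ Finset.Icc 1 N,
            ((⟪unitDir (2 * π * n / N), ξ⟫ : ℝ) : ℂ) *
              Complex.exp
                (Complex.I * (ω : ℂ) * ((⟪unitDir (2 * π * n / N), x⟫ : ℝ) : ℂ)))
      atTop (nhds (Complex.I * ((⟪‖x‖⁻¹ • x, ξ⟫ : ℝ) : ℂ) * ((J1 (ω * ‖x‖) : ℝ) : ℂ))) := by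
  set g : ℝ → ℂ := fun s =>
    (⟪unitDir s, ξ⟫ : ℂ) * Complex.exp (Complex.I * ω * (⟪unitDir s, x⟫ : ℝ))
  have hg : Continuous g := by fun_prop
  have hmean : ∫ t in 0..1, g (2 * π * t) =
      Complex.I * (⟪‖x‖⁻¹ • x, ξ⟫ : ℂ) * (J1 (ω * ‖x‖) : ℂ) := by
    rw [intervalIntegral.integral_comp_mul_left _ (by positivity), mul_zero, mul_one,
      integral_inner_unitDir_mul_exp_inner, Complex.real_smul]
    push_cast
    field_simp
  rw [← hmean]
  refine (tendsto_riemannSum_integral (hg.comp (continuous_const_mul (2 * π))).continuousOn).congr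
    fun N => ?_
  simp [g, mul_div_assoc, Complex.real_smul]

/-- The weighted discrete mean over `N` equispaced directions converges to
`i ⟨x/‖x‖, ξ⟩ J₁(ω‖x‖)`. -/
theorem weighted_discrete_mean_tendsto_J1 (ω : ℝ) (x ξ : EuclideanSpace ℝ (Fin 2))
    (hx : x ≠ 0) :
    Tendsto
      (fun N : ℕ =>
        (1 / (N : ℂ)) *
          ∑ n ∈ Finset.Icc 1 N,
            ((⟪unitDir (2 * π * n / N), ξ⟫ : ℝ) : ℂ) *
              Complex.exp
                (Complex.I * (ω : ℂ) * ((⟪unitDir (2 * π * n / N), x⟫ : ℝ) : ℂ)))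
      atTop (nhds (Complex.I * ((⟪‖x‖⁻¹ • x, ξ⟫ : ℝ) : ℂ) * ((J1 (ω * ‖x‖) : ℝ) : ℂ))) :=
  weighted_discrete_mean_tendsto_J1_general ω x ξ
end

section
/- Let r > 0, let 0 < ω₁ < ω_F, and let c ∈ ℝ. Then the frequency average of the single-frequency migration values satisfies the exact identity ∫_{ω₁}^{ω_F} ( J₀(ω·r)² − 2c²·J₁(ω·r)² ) dω = ω_F·( J₀(ω_F·r)² + J₁(ω_F·r)² ) − ω₁·( J₀(ω₁·r)² + J₁(ω₁·r)² ) + (1 − 2c²)·∫_{ω₁}^{ω_F} J₁(ω·r)² dω; that is, with Λ(r; ω) := ω·(J₀(ωr)² + J₁(ωr)²), the multi-frequency subspace migration value for a single contributing point at distance r equals (1/(ω_F − ω₁))·{ Λ(r; ω_F) − Λ(r; ω₁) + (1 − 2c²)·∫_{ω₁}^{ω_F} J₁(ωr)² dω }. -/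
open MeasureTheory Real Filter
open scoped RealInnerProductSpace

/-!
`Λ(ω) = ω (J₀(ωr)² + J₁(ωr)²)` is an antiderivative of `J₀(ωr)² − J₁(ωr)²`, by `J₀' = −J₁` and the
recurrence `u J₁'(u) + J₁(u) = u J₀(u)`. Both come from differentiating Bessel's integrals under
the integral sign: the first uses the symmetry `τ ↦ π − τ`, the second that
`(1 − u cos τ) cos (τ − u sin τ)` is the `τ`-derivative of `sin (τ − u sin τ)`. The identity is then
the fundamental theorem of calculus applied to `J₀² − 2c²J₁² = (J₀² − J₁²) + (1 − 2c²) J₁²`.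
-/

theorem hasDerivAt_integral_cos_sub_mul {a b : ℝ → ℝ} (ha : Continuous a) (hb : Continuous b)
    (s t x : ℝ) :
    HasDerivAt (fun x => ∫ τ in s..t, cos (b τ - x * a τ))
      (∫ τ in s..t, a τ * sin (b τ - x * a τ)) x := by
  refine (intervalIntegral.hasDerivAt_integral_of_dominated_loc_of_deriv_le
    (F := fun x τ => cos (b τ - x * a τ)) (F' := fun x τ => a τ * sin (b τ - x * a τ))
    (bound := fun τ => |a τ|) univ_mem
    (.of_forall fun y => (by fun_prop : Continuous _).aestronglyMeasurable)
    ((by fun_prop : Continuous _).intervalIntegrable _ _)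
    (by fun_prop : Continuous _).aestronglyMeasurable
    (.of_forall fun τ _ y _ => ?_) (ha.abs.intervalIntegrable _ _)
    (.of_forall fun τ _ y _ => ?_)).2
  · rw [norm_mul, Real.norm_eq_abs, Real.norm_eq_abs]
    exact mul_le_of_le_one_right (abs_nonneg _) (abs_sin_le_one _)
  · have := (((hasDerivAt_id y).mul_const (a τ)).const_sub (b τ)).cos
    exact this.congr_deriv (by simp only [id_eq]; ring)

theorem integral_cos_mul_cos_mul_sin_eq_zero (u : ℝ) :
    ∫ τ in (0:ℝ)..π, cos τ * cos (u * sin τ) = 0 := by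
  have h := intervalIntegral.integral_comp_sub_left
    (fun τ => cos τ * cos (u * sin τ)) (a := 0) (b := π) π
  simp only [sub_zero, sub_self, cos_pi_sub, sin_pi_sub, neg_mul,
    intervalIntegral.integral_neg] at h
  linarith

theorem J1_eq_integral_sin_mul_sin (u : ℝ) :
    J1 u = (1 / π) * ∫ τ in (0:ℝ)..π, sin τ * sin (u * sin τ) := by
  simp only [J1, cos_sub]
  rw [intervalIntegral.integral_add ((by fun_prop : Continuous _).intervalIntegrable _ _)
    ((by fun_prop : Continuous _).intervalIntegrable _ _),
    integral_cos_mul_cos_mul_sin_eq_zero, zero_add]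

theorem hasDerivAt_J0 (u : ℝ) : HasDerivAt J0 (-J1 u) u := by
  have hJ0 : J0 = fun x => (1 / π) * ∫ τ in (0:ℝ)..π, cos (0 - x * sin τ) := by
    funext x; simp [J0]
  have h := (hasDerivAt_integral_cos_sub_mul (b := fun _ => 0) continuous_sin continuous_const
    0 π u).const_mul (1 / π)
  have hval : (1 / π) * ∫ τ in (0:ℝ)..π, sin τ * sin (0 - u * sin τ) = -J1 u := by
    simp [J1_eq_integral_sin_mul_sin, intervalIntegral.integral_neg]
  rwa [← hJ0, hval] at h

theorem continuous_J0 : Continuous J0 :=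
  continuous_iff_continuousAt.2 fun u => (hasDerivAt_J0 u).continuousAt

theorem hasDerivAt_J1 (u : ℝ) :
    HasDerivAt J1 ((1 / π) * ∫ τ in (0:ℝ)..π, sin τ * sin (τ - u * sin τ)) u :=
  (hasDerivAt_integral_cos_sub_mul continuous_sin continuous_id 0 π u).const_mul (1 / π)

theorem differentiable_J1 : Differentiable ℝ J1 := fun u => (hasDerivAt_J1 u).differentiableAt

theorem integral_one_sub_mul_cos_mul_cos_sub_mul_sin_eq_zero (u : ℝ) :
    ∫ τ in (0:ℝ)..π, (1 - u * cos τ) * cos (τ - u * sin τ) = 0 := by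
  have h (τ : ℝ) : HasDerivAt (fun τ => sin (τ - u * sin τ))
      ((1 - u * cos τ) * cos (τ - u * sin τ)) τ := by
    simpa [mul_comm] using ((hasDerivAt_id τ).sub ((hasDerivAt_sin τ).const_mul u)).sin
  rw [intervalIntegral.integral_eq_sub_of_hasDerivAt (fun τ _ => h τ)
    ((by fun_prop : Continuous _).intervalIntegrable _ _)]
  simp

theorem mul_deriv_J1_add_J1 (u : ℝ) : u * deriv J1 u + J1 u = u * J0 u := by
  have hpoint (τ : ℝ) : u * (sin τ * sin (τ - u * sin τ)) + cos (τ - u * sin τ) =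
      u * cos (u * sin τ) + (1 - u * cos τ) * cos (τ - u * sin τ) := by
    have h := cos_sub τ (τ - u * sin τ)
    rw [sub_sub_cancel] at h
    linear_combination -u * h
  rw [(hasDerivAt_J1 u).deriv, J1, J0, mul_left_comm, mul_left_comm u, ← mul_add,
    ← intervalIntegral.integral_const_mul, ← intervalIntegral.integral_const_mul,
    ← intervalIntegral.integral_add ((by fun_prop : Continuous _).intervalIntegrable _ _)
    ((by fun_prop : Continuous _).intervalIntegrable _ _)]
  simp only [hpoint]
  rw [intervalIntegral.integral_add ((by fun_prop : Continuous _).intervalIntegrable _ _)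
    ((by fun_prop : Continuous _).intervalIntegrable _ _),
    integral_one_sub_mul_cos_mul_cos_sub_mul_sin_eq_zero, add_zero]

theorem hasDerivAt_mul_J0_sq_add_J1_sq (r ω : ℝ) :
    HasDerivAt (fun ω => ω * (J0 (ω * r) ^ 2 + J1 (ω * r) ^ 2))
      (J0 (ω * r) ^ 2 - J1 (ω * r) ^ 2) ω := by
  have hlin : HasDerivAt (fun ω => ω * r) r ω := by simpa using (hasDerivAt_id ω).mul_const r
  have h0 := (hasDerivAt_J0 (ω * r)).comp ω hlin
  have h1 := (differentiable_J1 (ω * r)).hasDerivAt.comp ω hlin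
  refine ((hasDerivAt_id ω).mul ((h0.pow 2).add (h1.pow 2))).congr_deriv ?_
  simp only [id_eq, Nat.cast_ofNat, Pi.add_apply, Pi.pow_apply, Function.comp_apply]
  linear_combination (2 * J1 (ω * r)) * mul_deriv_J1_add_J1 (ω * r)

theorem multi_frequency_migration_identity_general (r ω₁ ωF c : ℝ) :
    ∫ ω in ω₁..ωF, (J0 (ω * r) ^ 2 - 2 * c ^ 2 * J1 (ω * r) ^ 2) =
      ωF * (J0 (ωF * r) ^ 2 + J1 (ωF * r) ^ 2) -
        ω₁ * (J0 (ω₁ * r) ^ 2 + J1 (ω₁ * r) ^ 2) +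
        (1 - 2 * c ^ 2) * ∫ ω in ω₁..ωF, J1 (ω * r) ^ 2 := by
  have hJ0 : Continuous fun ω => J0 (ω * r) := continuous_J0.comp (by fun_prop)
  have hJ1 : Continuous fun ω => J1 (ω * r) := differentiable_J1.continuous.comp (by fun_prop)
  have hsplit : ∫ ω in ω₁..ωF, (J0 (ω * r) ^ 2 - 2 * c ^ 2 * J1 (ω * r) ^ 2) =
      (∫ ω in ω₁..ωF, (J0 (ω * r) ^ 2 - J1 (ω * r) ^ 2)) +
        ∫ ω in ω₁..ωF, (1 - 2 * c ^ 2) * J1 (ω * r) ^ 2 := by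
    rw [← intervalIntegral.integral_add ((by fun_prop : Continuous _).intervalIntegrable _ _)
      ((by fun_prop : Continuous _).intervalIntegrable _ _)]
    exact intervalIntegral.integral_congr fun ω _ => by ring
  rw [hsplit, intervalIntegral.integral_const_mul,
    intervalIntegral.integral_eq_sub_of_hasDerivAt
      (fun ω _ => hasDerivAt_mul_J0_sq_add_J1_sq r ω)
      ((by fun_prop : Continuous _).intervalIntegrable _ _)]

/-- Exact identity for the frequency average of the single-frequency migration values:
with `Λ(r; ω) = ω (J₀(ωr)² + J₁(ωr)²)`,
`∫_{ω₁}^{ω_F} (J₀(ωr)² − 2c² J₁(ωr)²) dω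
  = Λ(r; ω_F) − Λ(r; ω₁) + (1 − 2c²) ∫_{ω₁}^{ω_F} J₁(ωr)² dω`. -/
theorem multi_frequency_migration_identity (r ω₁ ωF c : ℝ) (hr : 0 < r)
    (hω₁ : 0 < ω₁) (hω : ω₁ < ωF) :
    ∫ ω in ω₁..ωF, (J0 (ω * r) ^ 2 - 2 * c ^ 2 * J1 (ω * r) ^ 2) =
      ωF * (J0 (ωF * r) ^ 2 + J1 (ωF * r) ^ 2) -
        ω₁ * (J0 (ω₁ * r) ^ 2 + J1 (ω₁ * r) ^ 2) +
        (1 - 2 * c ^ 2) * ∫ ω in ω₁..ωF, J1 (ω * r) ^ 2 :=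
  multi_frequency_migration_identity_general r ω₁ ωF c
end
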